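/- For a fixed integer s and all integers j, j', m, m' with j ≥ |s|, |m| ≤ j, j' ≥ |s|, |m'| ≤ j', the spin-weighted spherical harmonics of spin weight s are orthonormal on the sphere: ∫₀^{2π} ∫₀^{π} conj(ₛY_{jm}(θ,φ)) · ₛY_{j'm'}(θ,φ) · sin θ dθ dφ = δ_{jj'} δ_{mm'}. -/

import Mathlib

open scoped BigOperators

/-- The spin-weighted spherical harmonic `ₛY_{jm}(θ,φ)` of spin weight `s`, for integers
`s, j, m` (intended for `j ≥ |s|`; defined to be `0` when `|m| > j`), given by the
explicit Goldberg et al. formula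
`ₛY_{jm}(θ,φ) = [ (j+m)! (j−m)! (2j+1) / (4π (j+s)! (j−s)!) ]^{1/2} (sin(θ/2))^{2j}
  Σ_q C(j−s, q) C(j+s, q+s−m) (−1)^{j−q−s} e^{imφ} (cot(θ/2))^{2q+s−m}`,
the sum ranging over `max(0, m−s) ≤ q ≤ min(j−s, j+m)`. -/
noncomputable def swsh (s j m : ℤ) (θ φ : ℝ) : ℂ :=
  if |m| > j then 0 else
    (Real.sqrt ((((j + m).toNat.factorial : ℝ) * ((j - m).toNat.factorial : ℝ) *
          ((2 * j + 1 : ℤ) : ℝ)) /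
        (4 * Real.pi * ((j + s).toNat.factorial : ℝ) * ((j - s).toNat.factorial : ℝ))) : ℂ) *
      ((Real.sin (θ / 2) : ℂ) ^ (2 * j).toNat) *
      ∑ q ∈ Finset.Icc (max 0 (m - s)) (min (j - s) (j + m)),
        (((j - s).toNat.choose q.toNat : ℕ) : ℂ) *
          (((j + s).toNat.choose (q + s - m).toNat : ℕ) : ℂ) *
          (-1 : ℂ) ^ (j - q - s) *
          Complex.exp (Complex.I * (m : ℂ) * (φ : ℂ)) *
          ((Real.cos (θ / 2) / Real.sin (θ / 2) : ℝ) : ℂ) ^ (2 * q + s - m).toNat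

open scoped ComplexConjugate

/-!
Separating variables, `ₛY_{jm}(θ, φ) = Θ_{jm}(θ) e^{imφ}` with `Θ_{jm}` real, so the `φ`-integral
is `2π δ_{mm'}` and it remains to show `∫₀^π Θ_{jm} Θ_{j'm} sin θ dθ = δ_{jj'} / (2π)`. Expanding
both sums, the substitution `x = sin²(θ/2)` makes every term a Beta integral
`∫₀¹ x^A (1-x)^B dx = A! B! / (A+B+1)!`. Write `a = j + m`, `c = j + s`, `d = j - s`, and primes
for `j'`. For each term of the first sum, the sum over the second index is `d'! c'! / a'!` times
the `a'`-th alternating difference `∑ₖ (-1)^k C(a',k) P(k)` of a product `P` of two shifted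
Pochhammer polynomials of total degree `a`. That difference vanishes when `a < a'` (the case
`a > a'` follows by symmetry) and equals `(-1)^a a! lc(P)` when `a = a'`; Vandermonde's identity
then gives the norm.
-/

open Finset Real

section

open Nat

section FiniteDifference

open Polynomial

variable {R : Type*} [CommRing R]

theorem sum_range_neg_one_pow_mul_choose_mul_eval (P : R[X]) (n : ℕ) :
    ∑ k ∈ range (n + 1), (-1 : R) ^ k * n.choose k * P.eval (k : R) =
      (-1) ^ n * (fwdDiff 1)^[n] P.eval 0 := by
  rw [fwdDiff_iter_eq_sum_shift, mul_sum]
  refine sum_congr rfl fun k hk => ?_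
  have hkn : k ≤ n := Nat.lt_succ_iff.mp (mem_range.mp hk)
  rw [zsmul_eq_mul, zero_add, nsmul_one]
  push_cast
  rw [← mul_assoc, ← mul_assoc, ← pow_add, show n + (n - k) = k + 2 * (n - k) by omega, pow_add,
    pow_mul]
  simp

theorem sum_range_neg_one_pow_mul_choose_mul_eval_of_natDegree_lt {P : R[X]} {n : ℕ}
    (hP : P.natDegree < n) :
    ∑ k ∈ range (n + 1), (-1 : R) ^ k * n.choose k * P.eval (k : R) = 0 := by
  rw [sum_range_neg_one_pow_mul_choose_mul_eval, fwdDiff_iter_eq_zero_of_degree_lt hP]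
  simp

theorem sum_range_neg_one_pow_mul_choose_mul_eval_of_natDegree_eq {P : R[X]} {n : ℕ}
    (hP : P.natDegree = n) :
    ∑ k ∈ range (n + 1), (-1 : R) ^ k * n.choose k * P.eval (k : R) =
      (-1) ^ n * n ! * P.leadingCoeff := by
  rw [sum_range_neg_one_pow_mul_choose_mul_eval, ← hP, fwdDiff_iter_degree_eq_factorial]
  simp only [Pi.smul_apply, Pi.natCast_apply, smul_eq_mul]
  ring

end FiniteDifference

section PochhammerKernel

open Polynomial

theorem choose_mul_factorial_eq_eval_ascPochhammer {n k r : ℕ} (hk : k ≤ n + r) :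
    (n.choose k : ℝ) * (r + n - k)! = n ! / k ! * (ascPochhammer ℝ r).eval ((n : ℝ) + 1 - k) := by
  rcases le_or_gt k n with hkn | hnk
  · obtain ⟨w, rfl⟩ := Nat.exists_eq_add_of_le hkn
    have hw : (((k + w : ℕ) : ℝ) + 1 - k) = ((w + 1 : ℕ) : ℝ) := by push_cast; ring
    rw [hw, ← cast_ascFactorial, Nat.cast_choose ℝ hkn, show r + (k + w) - k = w + r by omega,
      show k + w - k = w by omega]
    field_simp
    exact_mod_cast (factorial_mul_ascFactorial w r).symm
  · have hroot : ((n : ℝ) + 1 - k) = -((k - n - 1 : ℕ) : ℝ) := by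
      rw [Nat.cast_sub (by omega), Nat.cast_sub (by omega)]; ring
    rw [Nat.choose_eq_zero_of_lt hnk, hroot, ascPochhammer_eval_neg_coe_nat_of_lt (by omega)]
    simp

theorem leadingCoeff_ascPochhammer_comp_C_sub_X (n : ℕ) (x : ℝ) :
    ((ascPochhammer ℝ n).comp (C x - X)).leadingCoeff = (-1) ^ n := by
  have h : (C x - X).natDegree = 1 := by rw [← neg_sub, natDegree_neg, natDegree_X_sub_C]
  rw [leadingCoeff_comp (by rw [h]; exact one_ne_zero), (monic_ascPochhammer ℝ n).leadingCoeff,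
    ← neg_sub, leadingCoeff_neg, leadingCoeff_X_sub_C, ascPochhammer_natDegree, one_mul]

noncomputable def pochhammerKernel (a c d q r : ℕ) : ℝ[X] :=
  (ascPochhammer ℝ r).comp (C ((d : ℝ) + 1) - X) *
    (ascPochhammer ℝ q).comp (X + C ((c : ℝ) + 1 - a))

theorem natDegree_pochhammerKernel (a c d q r : ℕ) :
    (pochhammerKernel a c d q r).natDegree = q + r := by
  have hne : (ascPochhammer ℝ r).comp (C ((d : ℝ) + 1) - X) ≠ 0 := by
    rw [← leadingCoeff_ne_zero, leadingCoeff_ascPochhammer_comp_C_sub_X]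
    exact pow_ne_zero _ (by norm_num)
  rw [pochhammerKernel, natDegree_mul hne ((monic_ascPochhammer ℝ q).comp_X_add_C _).ne_zero,
    natDegree_comp, natDegree_comp, ← neg_sub, natDegree_neg, natDegree_X_sub_C,
    natDegree_X_add_C, ascPochhammer_natDegree, ascPochhammer_natDegree]
  ring

theorem leadingCoeff_pochhammerKernel (a c d q r : ℕ) :
    (pochhammerKernel a c d q r).leadingCoeff = (-1) ^ r := by
  rw [pochhammerKernel, leadingCoeff_mul, leadingCoeff_ascPochhammer_comp_C_sub_X,
    ((monic_ascPochhammer ℝ q).comp_X_add_C _).leadingCoeff, mul_one]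

theorem sum_antidiagonal_choose_mul_factorial {a c d q r : ℕ} (hd : a ≤ d + r) (hc : a ≤ c + q) :
    ∑ y ∈ antidiagonal a, (-1 : ℝ) ^ y.1 * (d.choose y.1 * c.choose y.2) *
        ((r + d - y.1)! * (q + c - y.2)!) =
      d ! * c ! / a ! * ∑ k ∈ range (a + 1), (-1 : ℝ) ^ k * a.choose k *
        (pochhammerKernel a c d q r).eval (k : ℝ) := by
  rw [Nat.sum_antidiagonal_eq_sum_range_succ_mk, mul_sum]
  refine sum_congr rfl fun k hk => ?_
  have hka : k ≤ a := Nat.lt_succ_iff.mp (mem_range.mp hk)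
  have hd' := choose_mul_factorial_eq_eval_ascPochhammer (n := d) (k := k) (r := r) (by omega)
  have hc' := choose_mul_factorial_eq_eval_ascPochhammer (n := c) (k := a - k) (r := q) (by omega)
  rw [Nat.cast_sub hka, show (c : ℝ) + 1 - (a - k) = k + (c + 1 - a) by ring] at hc'
  simp only [pochhammerKernel, eval_mul, eval_comp, eval_sub, eval_add, eval_C, eval_X]
  calc _ = (-1 : ℝ) ^ k * (d.choose k * (r + d - k)! : ℝ) *
          (c.choose (a - k) * (q + c - (a - k))! : ℝ) := by ring
    _ = _ := by
      rw [hd', hc', Nat.cast_choose ℝ hka]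
      field_simp

theorem sum_antidiagonal_choose_mul_factorial_eq_zero {a c d q r : ℕ} (hd : a ≤ d + r)
    (hc : a ≤ c + q) (h : q + r < a) :
    ∑ y ∈ antidiagonal a, (-1 : ℝ) ^ y.1 * (d.choose y.1 * c.choose y.2) *
      ((r + d - y.1)! * (q + c - y.2)!) = 0 := by
  rw [sum_antidiagonal_choose_mul_factorial hd hc,
    sum_range_neg_one_pow_mul_choose_mul_eval_of_natDegree_lt
      ((natDegree_pochhammerKernel a c d q r).trans_lt h), mul_zero]

theorem sum_antidiagonal_choose_mul_factorial_of_add_eq {a c d q r : ℕ} (hd : q ≤ d)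
    (hc : r ≤ c) (h : q + r = a) :
    ∑ y ∈ antidiagonal a, (-1 : ℝ) ^ y.1 * (d.choose y.1 * c.choose y.2) *
      ((r + d - y.1)! * (q + c - y.2)!) = (-1) ^ q * d ! * c ! := by
  rw [sum_antidiagonal_choose_mul_factorial (by omega) (by omega),
    sum_range_neg_one_pow_mul_choose_mul_eval_of_natDegree_eq
      ((natDegree_pochhammerKernel a c d q r).trans h), leadingCoeff_pochhammerKernel, ← h]
  have : ((q + r)! : ℝ) ≠ 0 := by positivity
  field_simp
  rw [← pow_add, add_assoc, ← two_mul, pow_add, pow_mul]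
  simp

end PochhammerKernel

theorem cast_choose_mul_choose_eq_zero {d c k l : ℕ} (h : ¬(k ≤ d ∧ l ≤ c)) :
    (d.choose k * c.choose l : ℝ) = 0 := by
  rcases not_and_or.mp h with h | h
  · rw [Nat.choose_eq_zero_of_lt (not_le.mp h), Nat.cast_zero, zero_mul]
  · rw [Nat.choose_eq_zero_of_lt (not_le.mp h), Nat.cast_zero, mul_zero]

noncomputable def polarCoeffSum (a c d a' c' d' : ℕ) : ℝ :=
  ∑ x ∈ antidiagonal a, (-1 : ℝ) ^ x.1 * (d.choose x.1 * c.choose x.2) *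
    ∑ y ∈ antidiagonal a', (-1 : ℝ) ^ y.1 * (d'.choose y.1 * c'.choose y.2) *
      ((x.2 + d' - y.1)! * (x.1 + c' - y.2)!)

theorem polarCoeffSum_eq_zero_of_lt {a c d a' c' d' : ℕ} (hca : c + a' = c' + a)
    (had : a + d' = a' + d) (h : a < a') : polarCoeffSum a c d a' c' d' = 0 := by
  refine sum_eq_zero fun x hx => ?_
  rw [Finset.HasAntidiagonal.mem_antidiagonal] at hx
  by_cases hxdc : x.1 ≤ d ∧ x.2 ≤ c
  · rw [sum_antidiagonal_choose_mul_factorial_eq_zero (by omega) (by omega) (by omega), mul_zero]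
  · rw [cast_choose_mul_choose_eq_zero hxdc, mul_zero, zero_mul]

theorem polarCoeffSum_self (a c d : ℕ) :
    polarCoeffSum a c d a c d = d ! * c ! * (d + c).choose a := by
  have hterm : ∀ x ∈ antidiagonal a, (-1 : ℝ) ^ x.1 * (d.choose x.1 * c.choose x.2) *
      ∑ y ∈ antidiagonal a, (-1 : ℝ) ^ y.1 * (d.choose y.1 * c.choose y.2) *
        ((x.2 + d - y.1)! * (x.1 + c - y.2)!) = (d.choose x.1 * c.choose x.2) * (d ! * c !) := by
    intro x hx
    rw [Finset.HasAntidiagonal.mem_antidiagonal] at hx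
    by_cases hxdc : x.1 ≤ d ∧ x.2 ≤ c
    · rw [sum_antidiagonal_choose_mul_factorial_of_add_eq hxdc.1 hxdc.2 hx]
      calc _ = ((-1 : ℝ) ^ x.1) ^ 2 * (d.choose x.1 * c.choose x.2) * (d ! * c !) := by ring
        _ = _ := by rw [← pow_mul, pow_mul', neg_one_sq, one_pow, one_mul]
    · rw [cast_choose_mul_choose_eq_zero hxdc]
      ring
  rw [polarCoeffSum, sum_congr rfl hterm, ← sum_mul, Nat.add_choose_eq]
  push_cast
  ring

theorem integral_pow_mul_one_sub_pow (A B : ℕ) :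
    ∫ x in (0 : ℝ)..1, x ^ A * (1 - x) ^ B = A ! * B ! / (A + B + 1)! := by
  have h := Complex.betaIntegral_eq_Gamma_mul_div (A + 1) (B + 1) (by simp; positivity)
    (by simp; positivity)
  rw [Complex.betaIntegral] at h
  apply Complex.ofReal_injective
  rw [← intervalIntegral.integral_ofReal]
  push_cast
  simp only [add_sub_cancel_right, Complex.cpow_natCast] at h
  rw [show ((A : ℂ) + 1 + (B + 1)) = ((A + B + 1 : ℕ) : ℂ) + 1 by push_cast; ring,
    Complex.Gamma_nat_eq_factorial, Complex.Gamma_nat_eq_factorial,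
    Complex.Gamma_nat_eq_factorial] at h
  exact h

theorem integral_sin_half_pow_mul_cos_half_pow_mul_sin (A B : ℕ) :
    ∫ θ in (0 : ℝ)..π, sin (θ / 2) ^ (2 * A) * cos (θ / 2) ^ (2 * B) * sin θ =
      2 * (A ! * B ! / (A + B + 1)!) := by
  have hderiv : ∀ θ ∈ Set.uIcc 0 π, HasDerivAt (fun θ => sin (θ / 2) ^ 2) (sin θ / 2) θ := by
    intro θ _
    refine ((((hasDerivAt_id θ).div_const 2).sin).pow 2).congr_deriv ?_
    rw [show sin θ = sin (2 * (θ / 2)) by ring_nf, sin_two_mul]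
    simp
    ring
  have hsubst := intervalIntegral.integral_comp_mul_deriv hderiv
    (by fun_prop) (show Continuous fun x : ℝ => x ^ A * (1 - x) ^ B by fun_prop)
  simp only [Function.comp_def, zero_div, sin_zero, sin_pi_div_two] at hsubst
  norm_num at hsubst
  rw [← integral_pow_mul_one_sub_pow, ← hsubst, ← intervalIntegral.integral_const_mul]
  refine intervalIntegral.integral_congr fun θ _ => ?_
  simp only [pow_mul, ← cos_sq']
  ring

/-- With `a = j + m`, `c = j + s`, `d = j - s`, the pair `x = (q, a - q)` replaces the summation
index `q` of `ₛY_{jm}`, the sign `(-1)^{j-q-s}` becomes `(-1)^d (-1)^q`, and `cot^{2q+s-m}` is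
absorbed into `sin^{2j}`. Terms outside the original range of `q` vanish through the binomial
coefficients. -/
noncomputable def swshPolarTerm (c d : ℕ) (x : ℕ × ℕ) (θ : ℝ) : ℝ :=
  (-1 : ℝ) ^ x.1 * (d.choose x.1 * c.choose x.2) *
    (sin (θ / 2) ^ (x.2 + (d - x.1)) * cos (θ / 2) ^ (x.1 + (c - x.2)))

noncomputable def swshPolar (a c d : ℕ) (θ : ℝ) : ℝ :=
  ∑ x ∈ antidiagonal a, swshPolarTerm c d x θ

theorem integral_swshPolarTerm_mul {a c d a' c' d' : ℕ} (hca : c + a' = c' + a)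
    (had : a + d' = a' + d) {x y : ℕ × ℕ} (hx : x ∈ antidiagonal a) (hy : y ∈ antidiagonal a') :
    ∫ θ in (0 : ℝ)..π, swshPolarTerm c d x θ * swshPolarTerm c' d' y θ * sin θ =
      2 / (c + d' + 1)! * ((-1 : ℝ) ^ x.1 * (d.choose x.1 * c.choose x.2) *
        ((-1 : ℝ) ^ y.1 * (d'.choose y.1 * c'.choose y.2) *
          ((x.2 + d' - y.1)! * (x.1 + c' - y.2)!))) := by
  rw [Finset.HasAntidiagonal.mem_antidiagonal] at hx hy
  have hfactor : ∫ θ in (0 : ℝ)..π, swshPolarTerm c d x θ * swshPolarTerm c' d' y θ * sin θ =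
      (-1 : ℝ) ^ x.1 * (-1 : ℝ) ^ y.1 *
        ((d.choose x.1 * c.choose x.2 : ℝ) * (d'.choose y.1 * c'.choose y.2)) *
        ∫ θ in (0 : ℝ)..π, sin (θ / 2) ^ (x.2 + (d - x.1) + (y.2 + (d' - y.1))) *
          cos (θ / 2) ^ (x.1 + (c - x.2) + (y.1 + (c' - y.2))) * sin θ := by
    rw [← intervalIntegral.integral_const_mul]
    refine intervalIntegral.integral_congr fun θ _ => ?_
    simp only [swshPolarTerm, pow_add]
    ring
  rw [hfactor]
  by_cases hb : (x.1 ≤ d ∧ x.2 ≤ c) ∧ (y.1 ≤ d' ∧ y.2 ≤ c')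
  · rw [show x.2 + (d - x.1) + (y.2 + (d' - y.1)) = 2 * (x.2 + d' - y.1) by omega,
      show x.1 + (c - x.2) + (y.1 + (c' - y.2)) = 2 * (x.1 + c' - y.2) by omega,
      integral_sin_half_pow_mul_cos_half_pow_mul_sin,
      show x.2 + d' - y.1 + (x.1 + c' - y.2) + 1 = c + d' + 1 by omega]
    ring
  · have hzero : (d.choose x.1 * c.choose x.2 : ℝ) * (d'.choose y.1 * c'.choose y.2) = 0 := by
      rcases not_and_or.mp hb with h | h
      · rw [cast_choose_mul_choose_eq_zero h, zero_mul]
      · rw [cast_choose_mul_choose_eq_zero h, mul_zero]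
    rw [hzero]
    linear_combination (-(2 / ((c + d' + 1)! : ℝ)) * (-1 : ℝ) ^ x.1 * (-1 : ℝ) ^ y.1 *
      ((x.2 + d' - y.1)! * (x.1 + c' - y.2)!)) * hzero

theorem integral_swshPolar_mul {a c d a' c' d' : ℕ} (hca : c + a' = c' + a)
    (had : a + d' = a' + d) :
    ∫ θ in (0 : ℝ)..π, swshPolar a c d θ * swshPolar a' c' d' θ * sin θ =
      2 / (c + d' + 1)! * polarCoeffSum a c d a' c' d' := by
  have hcont : ∀ x y, Continuous fun θ => swshPolarTerm c d x θ * swshPolarTerm c' d' y θ * sin θ :=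
    fun x y => by simp only [swshPolarTerm]; fun_prop
  have hexpand : (fun θ => swshPolar a c d θ * swshPolar a' c' d' θ * sin θ) = fun θ =>
      ∑ x ∈ antidiagonal a, ∑ y ∈ antidiagonal a',
        swshPolarTerm c d x θ * swshPolarTerm c' d' y θ * sin θ := by
    funext θ
    rw [swshPolar, swshPolar, sum_mul_sum, sum_mul]
    exact sum_congr rfl fun x _ => by rw [sum_mul]
  rw [hexpand, intervalIntegral.integral_finsetSum
      fun x _ => (continuous_finsetSum _ fun y _ => hcont x y).intervalIntegrable _ _,
    polarCoeffSum, mul_sum]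
  refine sum_congr rfl fun x hx => ?_
  rw [intervalIntegral.integral_finsetSum fun y _ => (hcont x y).intervalIntegrable _ _, mul_sum,
    mul_sum]
  exact sum_congr rfl fun y hy => integral_swshPolarTerm_mul hca had hx hy

theorem integral_swshPolar_mul_eq_zero {a c d a' c' d' : ℕ} (hca : c + a' = c' + a)
    (had : a + d' = a' + d) (h : a ≠ a') :
    ∫ θ in (0 : ℝ)..π, swshPolar a c d θ * swshPolar a' c' d' θ * sin θ = 0 := by
  rcases lt_or_gt_of_ne h with h | h
  · rw [integral_swshPolar_mul hca had, polarCoeffSum_eq_zero_of_lt hca had h, mul_zero]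
  · simp_rw [mul_comm (swshPolar a c d _) (swshPolar a' c' d' _)]
    rw [integral_swshPolar_mul hca.symm had.symm,
      polarCoeffSum_eq_zero_of_lt hca.symm had.symm h, mul_zero]

theorem integral_swshPolar_mul_self {a c d : ℕ} (h : a ≤ c + d) :
    ∫ θ in (0 : ℝ)..π, swshPolar a c d θ * swshPolar a c d θ * sin θ =
      2 * c ! * d ! / ((c + d + 1) * a ! * (c + d - a)!) := by
  rw [integral_swshPolar_mul rfl rfl, polarCoeffSum_self, add_comm d c, Nat.cast_choose ℝ h,
    Nat.factorial_succ]
  push_cast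
  field_simp

end

theorem integral_const_mul_mul_const_mul_mul {a b : ℝ} (k k' : ℝ) (f g h : ℝ → ℝ) :
    ∫ x in a..b, k * f x * (k' * g x) * h x = k * k' * ∫ x in a..b, f x * g x * h x := by
  rw [← intervalIntegral.integral_const_mul]
  exact intervalIntegral.integral_congr fun x _ => by ring

noncomputable def swshTheta (s j m : ℤ) (θ : ℝ) : ℝ :=
  √(((j + m).toNat.factorial * (j - m).toNat.factorial * ((2 * j + 1 : ℤ) : ℝ)) /
      (4 * π * (j + s).toNat.factorial * (j - s).toNat.factorial)) *
    (-1) ^ (j - s).toNat * swshPolar (j + m).toNat (j + s).toNat (j - s).toNat θ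

theorem swsh_summand_eq {s j m q : ℤ} {a c d : ℕ} (ha : (a : ℤ) = j + m) (hc : (c : ℤ) = j + s)
    (hd : (d : ℤ) = j - s) (hq : q ∈ Icc (max 0 (m - s)) (min (j - s) (j + m))) (E z : ℂ) :
    ((d.choose q.toNat : ℕ) : ℂ) * ((c.choose (q + s - m).toNat : ℕ) : ℂ) *
        (-1 : ℂ) ^ (j - q - s) * E * z ^ (2 * q + s - m).toNat =
      (-1) ^ d * E * ((-1 : ℂ) ^ q.toNat *
        ((d.choose q.toNat * c.choose (j + m - q).toNat : ℕ) : ℂ) *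
        z ^ (q.toNat + (c - (j + m - q).toNat))) := by
  rw [mem_Icc] at hq
  have hk : q.toNat ≤ d := by omega
  rw [show (q + s - m).toNat = c - (j + m - q).toNat by omega,
    Nat.choose_symm (show (j + m - q).toNat ≤ c by omega),
    show (2 * q + s - m).toNat = q.toNat + (c - (j + m - q).toNat) by omega,
    show j - q - s = ((d - q.toNat : ℕ) : ℤ) by omega, zpow_natCast]
  have hsign : (-1 : ℂ) ^ d = (-1) ^ (d - q.toNat) * (-1) ^ q.toNat := by
    rw [← pow_add, Nat.sub_add_cancel hk]
  have hsq : ((-1 : ℂ) ^ q.toNat) ^ 2 = 1 := by rw [← pow_mul, pow_mul', neg_one_sq, one_pow]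
  rw [hsign]
  push_cast
  linear_combination -((d.choose q.toNat : ℂ) * (c.choose (j + m - q).toNat) * E *
    z ^ (q.toNat + (c - (j + m - q).toNat)) * (-1) ^ (d - q.toNat)) * hsq

theorem sum_swsh_summand_eq {s j m : ℤ} {a c d : ℕ} (ha : (a : ℤ) = j + m)
    (hc : (c : ℤ) = j + s) (hd : (d : ℤ) = j - s) (E z : ℂ) :
    ∑ q ∈ Icc (max 0 (m - s)) (min (j - s) (j + m)),
        ((d.choose q.toNat : ℕ) : ℂ) * ((c.choose (q + s - m).toNat : ℕ) : ℂ) *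
          (-1 : ℂ) ^ (j - q - s) * E * z ^ (2 * q + s - m).toNat =
      (-1) ^ d * E * ∑ x ∈ antidiagonal a,
        (-1 : ℂ) ^ x.1 * ((d.choose x.1 * c.choose x.2 : ℕ) : ℂ) * z ^ (x.1 + (c - x.2)) := by
  rw [mul_sum, sum_congr rfl fun q hq => swsh_summand_eq ha hc hd hq E z]
  refine sum_bij_ne_zero (fun q _ _ => (q.toNat, (j + m - q).toNat)) ?_ ?_ ?_ fun _ _ _ => rfl
  · intro q hq _
    rw [mem_Icc] at hq
    rw [Finset.HasAntidiagonal.mem_antidiagonal]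
    omega
  · intro q₁ hq₁ _ q₂ hq₂ _ h
    rw [mem_Icc] at hq₁ hq₂
    simp only [Prod.mk.injEq] at h
    omega
  · intro x hx hne
    rw [Finset.HasAntidiagonal.mem_antidiagonal] at hx
    have hb : x.1 ≤ d ∧ x.2 ≤ c := by
      by_contra hb
      refine hne ?_
      rw [show d.choose x.1 * c.choose x.2 = 0 by exact_mod_cast cast_choose_mul_choose_eq_zero hb]
      simp
    refine ⟨x.1, by rw [mem_Icc]; omega, ?_⟩
    have h₁ : (x.1 : ℤ).toNat = x.1 := Int.toNat_natCast x.1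
    have h₂ : (j + m - x.1).toNat = x.2 := by omega
    exact ⟨by rwa [h₁, h₂], Prod.ext h₁ h₂⟩

theorem sin_pow_mul_sum_cot_pow_eq_swshPolar (a c d : ℕ) {θ : ℝ} (hθ : sin (θ / 2) ≠ 0) :
    sin (θ / 2) ^ (c + d) * ∑ x ∈ antidiagonal a, (-1 : ℝ) ^ x.1 *
        (d.choose x.1 * c.choose x.2) * (cos (θ / 2) / sin (θ / 2)) ^ (x.1 + (c - x.2)) =
      swshPolar a c d θ := by
  rw [swshPolar, mul_sum]
  refine sum_congr rfl fun x hx => ?_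
  rw [Finset.HasAntidiagonal.mem_antidiagonal] at hx
  rw [swshPolarTerm]
  by_cases hb : x.1 ≤ d ∧ x.2 ≤ c
  · rw [show c + d = x.2 + (d - x.1) + (x.1 + (c - x.2)) by omega, pow_add, div_pow]
    field_simp
  · rw [cast_choose_mul_choose_eq_zero hb]
    ring

theorem swsh_eq_swshTheta_mul_exp {s j m : ℤ} (hj : |s| ≤ j) (hm : |m| ≤ j) {θ : ℝ}
    (hθ : sin (θ / 2) ≠ 0) (φ : ℝ) :
    swsh s j m θ φ = swshTheta s j m θ * Complex.exp (Complex.I * m * φ) := by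
  have := abs_le.mp hj; have := abs_le.mp hm
  rw [swsh, if_neg (not_lt.mpr hm), show (2 * j).toNat = (j + s).toNat + (j - s).toNat by omega,
    sum_swsh_summand_eq (a := (j + m).toNat) (by omega) (by omega) (by omega),
    swshTheta, ← sin_pow_mul_sum_cot_pow_eq_swshPolar _ _ _ hθ]
  push_cast
  ring

theorem integral_exp_int_mul_I (n : ℤ) :
    ∫ φ in (0 : ℝ)..2 * π, Complex.exp (Complex.I * n * φ) = if n = 0 then 2 * π else 0 := by
  split_ifs with hn
  · simp [hn]
  · have hc : Complex.I * n ≠ 0 := mul_ne_zero Complex.I_ne_zero (by exact_mod_cast hn)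
    rw [integral_exp_mul_complex hc]
    have h2π : Complex.exp (Complex.I * n * (2 * π)) = 1 := by
      rw [← Complex.exp_int_mul_two_pi_mul_I n]
      ring_nf
    simp [h2π]

theorem integral_conj_swsh_mul_swsh {s j m j' m' : ℤ} (hj : |s| ≤ j) (hm : |m| ≤ j)
    (hj' : |s| ≤ j') (hm' : |m'| ≤ j') (φ : ℝ) :
    ∫ θ in (0 : ℝ)..π, conj (swsh s j m θ φ) * swsh s j' m' θ φ * ((sin θ : ℝ) : ℂ) =
      ((∫ θ in (0 : ℝ)..π, swshTheta s j m θ * swshTheta s j' m' θ * sin θ : ℝ) : ℂ) *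
        Complex.exp (Complex.I * ↑(m' - m) * φ) := by
  rw [← intervalIntegral.integral_ofReal, ← intervalIntegral.integral_mul_const]
  refine intervalIntegral.integral_congr_ae (Filter.Eventually.of_forall fun θ hθ => ?_)
  rw [Set.uIoc_of_le pi_pos.le] at hθ
  have hsin : sin (θ / 2) ≠ 0 := (sin_pos_of_pos_of_lt_pi (by linarith [hθ.1])
    (by linarith [hθ.2, pi_pos])).ne'
  rw [swsh_eq_swshTheta_mul_exp hj hm hsin, swsh_eq_swshTheta_mul_exp hj' hm' hsin, map_mul,
    Complex.conj_ofReal, ← Complex.exp_conj]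
  simp only [map_mul, Complex.conj_I, map_intCast, Complex.conj_ofReal]
  push_cast
  rw [show Complex.I * (m' - m) * φ = -Complex.I * m * φ + Complex.I * m' * φ by ring,
    Complex.exp_add]
  ring

theorem integral_swshTheta_mul_eq_zero {s j m j' : ℤ} (hj : |s| ≤ j) (hm : |m| ≤ j)
    (hj' : |s| ≤ j') (hm' : |m| ≤ j') (h : j ≠ j') :
    ∫ θ in (0 : ℝ)..π, swshTheta s j m θ * swshTheta s j' m θ * sin θ = 0 := by
  have := abs_le.mp hj; have := abs_le.mp hm; have := abs_le.mp hj'; have := abs_le.mp hm'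
  simp only [swshTheta]
  rw [integral_const_mul_mul_const_mul_mul,
    integral_swshPolar_mul_eq_zero (by omega) (by omega) (by omega), mul_zero]

theorem integral_swshTheta_mul_self {s j m : ℤ} (hj : |s| ≤ j) (hm : |m| ≤ j) :
    ∫ θ in (0 : ℝ)..π, swshTheta s j m θ * swshTheta s j m θ * sin θ = (2 * π)⁻¹ := by
  have := abs_le.mp hj; have := abs_le.mp hm
  simp only [swshTheta]
  rw [integral_const_mul_mul_const_mul_mul, integral_swshPolar_mul_self (by omega),
    show (j + s).toNat + (j - s).toNat - (j + m).toNat = (j - m).toNat by omega,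
    show (2 * j + 1 : ℤ) = ((j + s).toNat + (j - s).toNat + 1 : ℕ) by omega,
    mul_mul_mul_comm, Real.mul_self_sqrt (by positivity), ← mul_pow]
  push_cast
  field_simp
  norm_num

/-- Orthonormality of the spin-weighted spherical harmonics of fixed spin weight `s` on
the sphere: `∫₀^{2π} ∫₀^{π} conj(ₛY_{jm}) ₛY_{j'm'} sinθ dθ dφ = δ_{jj'} δ_{mm'}`. -/
theorem swsh_orthonormal
    (s j m j' m' : ℤ) (hj : |s| ≤ j) (hm : |m| ≤ j) (hj' : |s| ≤ j') (hm' : |m'| ≤ j') :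
    (∫ φ in (0 : ℝ)..(2 * Real.pi), ∫ θ in (0 : ℝ)..Real.pi,
        conj (swsh s j m θ φ) * swsh s j' m' θ φ * ((Real.sin θ : ℝ) : ℂ))
      = if j = j' ∧ m = m' then 1 else 0 := by
  simp_rw [integral_conj_swsh_mul_swsh hj hm hj' hm', intervalIntegral.integral_const_mul,
    integral_exp_int_mul_I, sub_eq_zero]
  obtain rfl | hm_ne := eq_or_ne m' m
  · obtain rfl | hj_ne := eq_or_ne j j'
    · rw [integral_swshTheta_mul_self hj hm]
      push_cast
      field_simp
      simp
    · simp [integral_swshTheta_mul_eq_zero hj hm hj' hm' hj_ne, hj_ne]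
  · simp [hm_ne, hm_ne.symm]
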